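/- Let 0 < x₀ < 1/2 and h ≥ 1 with h·x₀ < 1/2, integers k ≥ 2, 1 ≤ l ≤ k, and p(x) = ∑_{j=⌈k/2⌉}^{k} l·(2j/k − 1)·C(k,j)·(1−x)^j·x^{k−j}. Then x₀·(h−1)/p(h·x₀) ≤ x₀·(h−1) / (l·((h x₀)^k + 1 − 2 h x₀)). -/

import Mathlib

/-!
With `B j = C(k,j) (1-x)^j x^(k-j)` the Bernstein weights of `1 - x`, the full sum
`∑_{j=0}^k (2j/k - 1) B j` is `2(1-x) - 1 = 1 - 2x`, because `∑ B j = 1` and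
`∑ j B j = k(1-x)`.
The terms with `2j ≤ k` are nonpositive, the one with `j = 0` being `-x^k`; dropping them leaves
`p(x)/l ≥ 1 - 2x + x^k`, which is positive for `x < 1/2`, so the quotient can only grow when
`p(h x₀)` is replaced by this lower bound.
-/

open Finset

theorem sum_range_margin_mul_bernstein {R : Type*} [Field R] [CharZero R] {k : ℕ} (hk : k ≠ 0)
    (x : R) :
    ∑ j ∈ range (k + 1), (2 * (j : R) / k - 1) * k.choose j * (1 - x) ^ j * x ^ (k - j)
      = 1 - 2 * x := by
  have hweights : ∑ j ∈ range (k + 1), (k.choose j : R) * (1 - x) ^ j * x ^ (k - j) = 1 := by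
    simpa [bernsteinPolynomial, Polynomial.eval_finsetSum] using
      congrArg (Polynomial.eval (1 - x)) (bernsteinPolynomial.sum R k)
  have hmean : ∑ j ∈ range (k + 1), (j : R) * (k.choose j * (1 - x) ^ j * x ^ (k - j))
      = k * (1 - x) := by
    simpa [bernsteinPolynomial, Polynomial.eval_finsetSum] using
      congrArg (Polynomial.eval (1 - x)) (bernsteinPolynomial.sum_smul R k)
  have hk' : (k : R) ≠ 0 := Nat.cast_ne_zero.mpr hk
  calc ∑ j ∈ range (k + 1), (2 * (j : R) / k - 1) * k.choose j * (1 - x) ^ j * x ^ (k - j)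
      = 2 / k * ∑ j ∈ range (k + 1), (j : R) * (k.choose j * (1 - x) ^ j * x ^ (k - j))
          - ∑ j ∈ range (k + 1), (k.choose j : R) * (1 - x) ^ j * x ^ (k - j) := by
        rw [mul_sum, ← sum_sub_distrib]
        refine sum_congr rfl fun j _ => ?_
        ring
    _ = 1 - 2 * x := by
        rw [hmean, hweights]
        field_simp
        ring

theorem margin_mul_bernstein_nonpos {k j : ℕ} (hj : 2 * j ≤ k) {x : ℝ} (hx0 : 0 ≤ x)
    (hx1 : x ≤ 1) :
    (2 * (j : ℝ) / k - 1) * k.choose j * (1 - x) ^ j * x ^ (k - j) ≤ 0 := by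
  have hmargin : 2 * (j : ℝ) / k - 1 ≤ 0 := by
    rcases Nat.eq_zero_or_pos k with rfl | hk
    · simp
    · rw [sub_nonpos, div_le_one (by positivity)]
      exact_mod_cast hj
  have hweight : 0 ≤ (k.choose j : ℝ) * (1 - x) ^ j * x ^ (k - j) := by
    have : 0 ≤ 1 - x := by linarith
    positivity
  simpa only [mul_assoc] using mul_nonpos_of_nonpos_of_nonneg hmargin hweight

theorem pow_add_one_sub_two_mul_le_sum_Icc {k : ℕ} (hk : k ≠ 0) {x : ℝ} (hx0 : 0 ≤ x)
    (hx1 : x ≤ 1) :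
    x ^ k + 1 - 2 * x ≤
      ∑ j ∈ Icc ((k + 1) / 2) k,
        (2 * (j : ℝ) / k - 1) * k.choose j * (1 - x) ^ j * x ^ (k - j) := by
  set f : ℕ → ℝ := fun j => (2 * (j : ℝ) / k - 1) * k.choose j * (1 - x) ^ j * x ^ (k - j)
  obtain ⟨m, hm⟩ : ∃ m, (k + 1) / 2 = m + 1 := ⟨(k + 1) / 2 - 1, by omega⟩
  have hsplit : ∑ j ∈ range (m + 1), f j + ∑ j ∈ Icc (m + 1) k, f j = 1 - 2 * x := by
    rw [← Ico_add_one_right_eq_Icc, sum_range_add_sum_Ico f (by omega)]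
    exact sum_range_margin_mul_bernstein hk x
  have hlow : ∑ j ∈ range (m + 1), f j ≤ -x ^ k := by
    have hf0 : f 0 = -x ^ k := by simp [f]
    have htail : ∑ j ∈ range m, f (j + 1) ≤ 0 :=
      sum_nonpos fun j hj => margin_mul_bernstein_nonpos (by rw [mem_range] at hj; omega) hx0 hx1
    rw [sum_range_succ', hf0]
    linarith
  rw [hm]
  linarith

theorem stmt_17_general (k l : ℕ) (hk : 2 ≤ k) (hl1 : 1 ≤ l)
    (x₀ h : ℝ) (hx₀ : 0 < x₀) (hh : 1 ≤ h)
    (hhx : h * x₀ < 1 / 2) :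
    x₀ * (h - 1) /
        (∑ j ∈ Finset.Icc ((k + 1) / 2) k,
          (l : ℝ) * (2 * (j : ℝ) / k - 1) * (k.choose j : ℝ)
            * (1 - h * x₀) ^ j * (h * x₀) ^ (k - j))
      ≤ x₀ * (h - 1) / ((l : ℝ) * ((h * x₀) ^ k + 1 - 2 * (h * x₀))) := by
  set x := h * x₀
  have hx : 0 < x := by positivity
  have hl : (0 : ℝ) < l := by exact_mod_cast hl1
  have hbound : 0 < x ^ k + 1 - 2 * x := by
    have := pow_pos hx k
    linarith
  have hp : ∑ j ∈ Icc ((k + 1) / 2) k,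
        (l : ℝ) * (2 * (j : ℝ) / k - 1) * k.choose j * (1 - x) ^ j * x ^ (k - j)
      = l * ∑ j ∈ Icc ((k + 1) / 2) k,
          (2 * (j : ℝ) / k - 1) * k.choose j * (1 - x) ^ j * x ^ (k - j) := by
    rw [mul_sum]
    exact sum_congr rfl fun j _ => by ring
  rw [hp]
  refine div_le_div_of_nonneg_left (mul_nonneg hx₀.le (by linarith)) (mul_pos hl hbound) ?_
  exact mul_le_mul_of_nonneg_left
    (pow_add_one_sub_two_mul_le_sum_Icc (by omega) hx.le (by linarith)) hl.le

/-- The convergence-time bound: for `0 < x₀`, `h ≥ 1` with `h·x₀ < 1/2`,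
`x₀(h−1)/p(h·x₀) ≤ x₀(h−1)/(l·((h x₀)^k + 1 − 2 h x₀))`. -/
theorem stmt_17 (k l : ℕ) (hk : 2 ≤ k) (hl1 : 1 ≤ l) (hlk : l ≤ k)
    (x₀ h : ℝ) (hx₀ : 0 < x₀) (hx₀half : x₀ < 1 / 2) (hh : 1 ≤ h)
    (hhx : h * x₀ < 1 / 2) :
    x₀ * (h - 1) /
        (∑ j ∈ Finset.Icc ((k + 1) / 2) k,
          (l : ℝ) * (2 * (j : ℝ) / k - 1) * (k.choose j : ℝ)
            * (1 - h * x₀) ^ j * (h * x₀) ^ (k - j))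
      ≤ x₀ * (h - 1) / ((l : ℝ) * ((h * x₀) ^ k + 1 - 2 * (h * x₀))) :=
  stmt_17_general k l hk hl1 x₀ h hx₀ hh hhx
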